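/- arXiv:2004.13440 — 3 statements merged into one kernel-verified Lean document; each statement's English description precedes it below -/
import Mathlib

section
/- For the (2,1) random walk Y on ℤ₊ with transition probabilities P(n → n+1) = q_n, P(n → n−2) = p_n = 1 − q_n for n ≥ 2 (and deterministic steps 0 → 1 → 2), set N_k = [[θ_k, θ_k], [1, 0]] with θ_k = p_k/q_k. Then for 0 < m ≤ k ≤ n, the probability that Y started from k hits [0, m] before hitting [n, ∞) equals (∑_{s=k}^{n−1} e₁ N_s⋯N_{m+1} e₁^t) / (1 + ∑_{s=m+1}^{n−1} e₁ N_s⋯N_{m+1} e₁^t), where e₁ = (1,0) and an empty matrix product is the identity. -/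
open Matrix Filter

/-- Product `N s * N (s-1) * ⋯ * N (m+1)`, equal to the identity when `s ≤ m`. -/
noncomputable def matProdDesc (N : ℕ → Matrix (Fin 2) (Fin 2) ℝ) (m : ℕ) :
    ℕ → Matrix (Fin 2) (Fin 2) ℝ
  | 0 => 1
  | (s+1) => if s + 1 ≤ m then 1 else N (s+1) * matProdDesc N m s

/-!
Write `d s = h s - h (s+1)`. Dividing the harmonic equation at `j` by `q j` gives the second-order
recurrence `d j = θ j * (d (j-1) + d (j-2))`, i.e. `(d j, d (j-1)) = N j (d (j-1), d (j-2))`.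
Since `h (m-1) = h m`, the initial vector is `(c, 0)` with `c = d m`, so `d s = (N s ⋯ N (m+1))₀₀ * c`.
Telescoping from `h n = 0` gives `h k = c * ∑_{s=k}^{n-1} (N s ⋯ N (m+1))₀₀`, and the boundary value
`h m = 1` fixes `c = 1 / (1 + ∑_{s=m+1}^{n-1} (N s ⋯ N (m+1))₀₀)`.
-/

open Finset

section matProdDesc

variable {N : ℕ → Matrix (Fin 2) (Fin 2) ℝ} {m s : ℕ}

lemma matProdDesc_of_le (hs : s ≤ m) : matProdDesc N m s = 1 := by
  cases s with
  | zero => rfl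
  | succ s => simp [matProdDesc, hs]

lemma matProdDesc_succ (hs : m ≤ s) :
    matProdDesc N m (s + 1) = N (s + 1) * matProdDesc N m s := by
  rw [matProdDesc, if_neg (by omega)]

lemma eq_matProdDesc_mulVec {v : ℕ → Fin 2 → ℝ} {t : ℕ}
    (hv : ∀ s, m < s → s ≤ t → v s = N s *ᵥ v (s - 1)) :
    ∀ s, m ≤ s → s ≤ t → v s = matProdDesc N m s *ᵥ v m := by
  intro s hms
  induction s, hms using Nat.le_induction with
  | base => simp [matProdDesc_of_le le_rfl]
  | succ s hms ih =>
    intro hst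
    rw [hv (s + 1) (by omega) hst, Nat.add_sub_cancel, ih (by omega), matProdDesc_succ hms,
      mulVec_mulVec]

end matProdDesc

lemma sum_Icc_sub_one_sub_succ {M : Type*} [AddCommGroup M] (f : ℕ → M) {k n : ℕ}
    (hkn : k ≤ n) (hn : 0 < n) :
    ∑ s ∈ Icc k (n - 1), (f s - f (s + 1)) = f k - f n := by
  have hIcc : Icc k (n - 1) = Ico k n := by ext; simp only [mem_Icc, mem_Ico]; omega
  rw [hIcc, ← neg_sub (f n), ← sum_Ico_sub f hkn, ← sum_neg_distrib]
  simp only [neg_sub]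

lemma sub_eq_div_mul_sub_of_eq_add {q a b c : ℝ} (hq : q ≠ 0)
    (h : b = q * a + (1 - q) * c) : b - a = (1 - q) / q * (c - b) := by
  field_simp
  linarith

theorem sub_succ_eq_matProdDesc_mul (q p θ : ℕ → ℝ) (hq : ∀ j, q j ≠ 0)
    (hp : ∀ j, p j = 1 - q j) (hθ : ∀ k, θ k = p k / q k)
    (N : ℕ → Matrix (Fin 2) (Fin 2) ℝ) (hN : ∀ k, N k = !![θ k, θ k; 1, 0])
    (m t : ℕ) (h : ℕ → ℝ) (hflat : h (m - 1) = h m)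
    (hharm : ∀ j, m + 1 ≤ j → j ≤ t → h j = q j * h (j + 1) + p j * h (j - 2)) :
    ∀ s, m ≤ s → s ≤ t → h s - h (s + 1) = matProdDesc N m s 0 0 * (h m - h (m + 1)) := by
  set v : ℕ → Fin 2 → ℝ := fun s => ![h s - h (s + 1), h (s - 1) - h s] with hv_def
  have hv : ∀ s, m < s → s ≤ t → v s = N s *ᵥ v (s - 1) := by
    intro s hms hst
    have step := sub_eq_div_mul_sub_of_eq_add (hq s) (hp s ▸ hharm s hms hst)
    obtain ⟨e1, e2⟩ : s - 1 + 1 = s ∧ s - 1 - 1 = s - 2 := by omega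
    ext i
    fin_cases i
    · simp only [hv_def, Fin.zero_eta, Fin.isValue, cons_val_zero, step, mulVec, dotProduct, hN, hθ,
        hp, of_apply, cons_val', cons_val_fin_one, e1, e2, Fin.sum_univ_two, cons_val_one]
      ring
    · simp [hv_def, hN, mulVec, dotProduct, e1]
  intro s hms hst
  simpa [hv_def, hflat, mulVec, dotProduct, mul_comm] using
    congrFun (eq_matProdDesc_mulVec hv s hms hst) 0

theorem hitting_probability_formula_general (q p θ : ℕ → ℝ)
    (hq : ∀ j, 0 < q j ∧ q j < 1) (hp : ∀ j, p j = 1 - q j)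
    (hθ : ∀ k, θ k = p k / q k)
    (N : ℕ → Matrix (Fin 2) (Fin 2) ℝ) (hN : ∀ k, N k = !![θ k, θ k; 1, 0])
    (m k n : ℕ) (hmk : m ≤ k) (hkn : k ≤ n)
    (h : ℕ → ℝ)
    (hbm : h m = 1) (hbm1 : h (m-1) = 1) (hbn : h n = 0)
    (hharm : ∀ j, m + 1 ≤ j → j ≤ n - 1 → h j = q j * h (j+1) + p j * h (j-2)) :
    h k = (∑ s ∈ Finset.Icc k (n-1), (matProdDesc N m s) 0 0) /
      (1 + ∑ s ∈ Finset.Icc (m+1) (n-1), (matProdDesc N m s) 0 0) := by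
  have hmn : m < n := by
    by_contra!
    obtain rfl : m = n := by omega
    exact one_ne_zero (hbm.symm.trans hbn)
  have hdiff := sub_succ_eq_matProdDesc_mul q p θ (fun j => (hq j).1.ne') hp hθ N hN m (n - 1) h
    (hbm1.trans hbm.symm) hharm
  set c := h m - h (m + 1)
  have htail : ∀ j, m ≤ j → j ≤ n → h j = (∑ s ∈ Icc j (n - 1), matProdDesc N m s 0 0) * c := by
    intro j hmj hjn
    rw [sum_mul, ← sum_congr rfl fun s hs => hdiff s (hmj.trans (mem_Icc.1 hs).1) (mem_Icc.1 hs).2,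
      sum_Icc_sub_one_sub_succ h hjn (by omega), hbn, sub_zero]
  have hnorm : (1 + ∑ s ∈ Icc (m + 1) (n - 1), matProdDesc N m s 0 0) * c = 1 := by
    have hm_tail := htail m le_rfl hmn.le
    rwa [hbm, ← add_sum_Ioc_eq_sum_Icc (by omega), ← Icc_add_one_left_eq_Ioc,
      matProdDesc_of_le le_rfl, one_apply_eq, eq_comm] at hm_tail
  refine eq_div_of_mul_eq (left_ne_zero_of_mul_eq_one hnorm) ?_
  rw [htail k hmk hkn, mul_assoc, mul_comm c, hnorm, mul_one]

theorem hitting_probability_formula (q p θ : ℕ → ℝ)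
    (hq : ∀ j, 0 < q j ∧ q j < 1) (hp : ∀ j, p j = 1 - q j)
    (hθ : ∀ k, θ k = p k / q k)
    (N : ℕ → Matrix (Fin 2) (Fin 2) ℝ) (hN : ∀ k, N k = !![θ k, θ k; 1, 0])
    (m k n : ℕ) (hm : 0 < m) (hmk : m ≤ k) (hkn : k ≤ n)
    (h : ℕ → ℝ)
    (hbm : h m = 1) (hbm1 : h (m-1) = 1) (hbn : h n = 0)
    (hharm : ∀ j, m + 1 ≤ j → j ≤ n - 1 → h j = q j * h (j+1) + p j * h (j-2)) :
    h k = (∑ s ∈ Finset.Icc k (n-1), (matProdDesc N m s) 0 0) /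
      (1 + ∑ s ∈ Finset.Icc (m+1) (n-1), (matProdDesc N m s) 0 0) :=
  hitting_probability_formula_general q p θ hq hp hθ N hN m k n hmk hkn h hbm hbm1 hbn hharm
end

section
/- Let (η_i) be a real sequence with η_i → 1/2 as i → ∞, and define h_k = ∑_{i=3}^{k−1} (−1)^{k−i+1} η_i η_{i+1} ⋯ η_{k−1} for k ≥ 3 (with h_3 interpreted via the empty-sum convention as 0 when the range is empty). Then lim_{k→∞} h_k = 1/3. -/
open Filter Topology

/-!
The sums satisfy `h (k + 1) = η k * (1 - h k)`. Near the fixed point `L = c / (1 + c)` of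
`x ↦ c * (1 - x)` this recursion is a contraction with ratio about `|c| < 1`, perturbed by a term
of size `|η k - c| → 0`, so the error `h k - L` tends to zero. For `c = 1/2`, `L = 1/3`.
-/

lemma le_pow_mul_add_of_le_mul_add {u : ℕ → ℝ} {r δ : ℝ} {N : ℕ} (hr0 : 0 ≤ r) (hr1 : r < 1)
    (h : ∀ n ≥ N, u (n + 1) ≤ r * u n + δ) (m : ℕ) :
    u (N + m) ≤ r ^ m * (u N - δ / (1 - r)) + δ / (1 - r) := by
  induction m with
  | zero => simp
  | succ m ih =>
    have hr : 1 - r ≠ 0 := by linarith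
    calc u (N + (m + 1)) ≤ r * u (N + m) + δ := h (N + m) (Nat.le_add_right N m)
      _ ≤ r * (r ^ m * (u N - δ / (1 - r)) + δ / (1 - r)) + δ := by gcongr
      _ = r ^ (m + 1) * (u N - δ / (1 - r)) + δ / (1 - r) := by field_simp; ring

lemma tendsto_zero_of_le_mul_add {u c : ℕ → ℝ} {r : ℝ} (hr0 : 0 ≤ r) (hr1 : r < 1)
    (hu : ∀ n, 0 ≤ u n) (hc : Tendsto c atTop (𝓝 0))
    (h : ∀ᶠ n in atTop, u (n + 1) ≤ r * u n + c n) :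
    Tendsto u atTop (𝓝 0) := by
  refine tendsto_order.2 ⟨fun a ha => .of_forall fun n => ha.trans_le (hu n), fun ε hε => ?_⟩
  have hδ : (1 - r) * ε / 2 / (1 - r) = ε / 2 := by field_simp [show 1 - r ≠ 0 by linarith]
  obtain ⟨N, hN⟩ := eventually_atTop.1 (h.and (hc.eventually (eventually_le_nhds (by
    nlinarith : 0 < (1 - r) * ε / 2))))
  have hbound : ∀ m, u (N + m) ≤ r ^ m * (u N - ε / 2) + ε / 2 := fun m => by
    simpa only [hδ] using le_pow_mul_add_of_le_mul_add (δ := (1 - r) * ε / 2) hr0 hr1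
      (fun n hn => (hN n hn).1.trans (by linarith [(hN n hn).2])) m
  have hlim : Tendsto (fun m => r ^ m * (u N - ε / 2) + ε / 2) atTop (𝓝 (ε / 2)) := by
    simpa using ((tendsto_pow_atTop_nhds_zero_of_lt_one hr0 hr1).mul_const (u N - ε / 2)).add_const
      (ε / 2)
  obtain ⟨M, hM⟩ := eventually_atTop.1 (hlim.eventually (eventually_lt_nhds (half_lt_self hε)))
  refine eventually_atTop.2 ⟨N + M, fun n hn => ?_⟩
  obtain ⟨m, rfl⟩ := Nat.exists_eq_add_of_le (le_of_add_le_left hn)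
  exact (hbound m).trans_lt (hM m (by omega))

def altProdSum (η : ℕ → ℝ) (s k : ℕ) : ℝ :=
  ∑ i ∈ Finset.Icc s (k - 1), (-1 : ℝ) ^ (k - i + 1) * ∏ j ∈ Finset.Icc i (k - 1), η j

lemma altProdSum_succ (η : ℕ → ℝ) {s k : ℕ} (hk : 0 < k) (hsk : s ≤ k) :
    altProdSum η s (k + 1) = η k * (1 - altProdSum η s k) := by
  obtain ⟨m, rfl⟩ : ∃ m, k = m + 1 := ⟨k - 1, by omega⟩
  simp only [altProdSum, Nat.add_sub_cancel]
  have hterm : ∀ i ∈ Finset.Icc s m,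
      (-1 : ℝ) ^ (m + 1 + 1 - i + 1) * ∏ j ∈ Finset.Icc i (m + 1), η j = -(η (m + 1) * ((-1 : ℝ) ^ (m + 1 - i + 1) * ∏ j ∈ Finset.Icc i m, η j)) := by
    intro i hi
    have him : i ≤ m := (Finset.mem_Icc.mp hi).2
    rw [Finset.prod_Icc_succ_top (by omega), show m + 1 + 1 - i + 1 = m + 1 - i + 1 + 1 by omega,
      pow_succ]
    ring
  rw [Finset.sum_Icc_succ_top (by omega), Finset.sum_congr rfl hterm, Finset.sum_neg_distrib,
    ← Finset.mul_sum, Finset.Icc_self, Finset.prod_singleton, Nat.add_sub_cancel_left]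
  ring

lemma tendsto_div_one_add_of_eq_mul_one_sub {η x : ℕ → ℝ} {c : ℝ} (hc : |c| < 1)
    (hη : Tendsto η atTop (𝓝 c)) (hx : ∀ᶠ n in atTop, x (n + 1) = η n * (1 - x n)) :
    Tendsto x atTop (𝓝 (c / (1 + c))) := by
  set L := c / (1 + c) with hL
  have hfix : c * (1 - L) = L := by
    have : 1 + c ≠ 0 := by linarith [neg_abs_le c]
    rw [hL]
    field_simp
    ring
  obtain ⟨r, hcr, hr1⟩ := exists_between hc
  have hηr : ∀ᶠ n in atTop, |η n| ≤ r :=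
    (continuous_abs.tendsto c).comp hη |>.eventually (eventually_le_nhds hcr)
  have hpert : Tendsto (fun n => |1 - L| * |η n - c|) atTop (𝓝 0) := by
    simpa using ((continuous_abs.tendsto 0).comp (tendsto_sub_nhds_zero_iff.2 hη)).const_mul |1 - L|
  have hcontract : ∀ᶠ n in atTop, |x (n + 1) - L| ≤ r * |x n - L| + |1 - L| * |η n - c| := by
    filter_upwards [hx, hηr] with n hxn hηn
    have herr : x (n + 1) - L = (η n - c) * (1 - L) - η n * (x n - L) := by
      linear_combination hxn + hfix
    calc |x (n + 1) - L| ≤ |(η n - c) * (1 - L)| + |η n * (x n - L)| := by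
          rw [herr]; exact abs_sub _ _
      _ ≤ r * |x n - L| + |1 - L| * |η n - c| := by
          rw [abs_mul, abs_mul]
          nlinarith [abs_nonneg (x n - L)]
  have herr := tendsto_zero_of_le_mul_add (u := fun n => |x n - L|)
    ((abs_nonneg c).trans hcr.le) hr1 (fun n => abs_nonneg _) hpert hcontract
  exact tendsto_sub_nhds_zero_iff.1 ((tendsto_zero_iff_abs_tendsto_zero _).2 herr)

theorem alternating_product_sum_limit (η : ℕ → ℝ) (hη : Tendsto η atTop (nhds (1/2))) :
    Tendsto (fun k => ∑ i ∈ Finset.Icc 3 (k-1),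
        (-1 : ℝ) ^ (k - i + 1) * ∏ j ∈ Finset.Icc i (k-1), η j)
      atTop (nhds (1/3)) := by
  have hrec : ∀ᶠ k in atTop, altProdSum η 3 (k + 1) = η k * (1 - altProdSum η 3 k) :=
    eventually_atTop.2 ⟨3, fun k hk => altProdSum_succ η (by omega) hk⟩
  have hlim := tendsto_div_one_add_of_eq_mul_one_sub (by norm_num) hη hrec
  rwa [show (1 / 2 : ℝ) / (1 + 1 / 2) = 1 / 3 by norm_num] at hlim
end

section
/- Let (β_k) be a sequence of positive reals with β_k → 2, and define Γ_k for k ≥ 3 by the recursion Γ_{k+1} = β_{k+1}/(1 + Γ_k) with some initial value Γ_3 > 0. Then Γ_k converges as k → ∞, and its limit η̃ satisfies η̃ = 2/(1 + η̃), i.e. η̃ = 1. -/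
open Filter

theorem limit_periodic_continued_fraction (β Γ : ℕ → ℝ)
    (hβpos : ∀ k, 0 < β k) (hβ : Tendsto β atTop (nhds 2))
    (hΓ3 : 0 < Γ 3) (hrec : ∀ k, 3 ≤ k → Γ (k+1) = β (k+1) / (1 + Γ k)) :
    ∃ η : ℝ, Tendsto Γ atTop (nhds η) ∧ η = 2 / (1 + η) ∧ η = 1 := by
  refine ⟨1, ?_, by norm_num, rfl⟩
  -- positivity of Γ for k ≥ 3
  have hpos : ∀ k, 3 ≤ k → 0 < Γ k := by
    intro k hk
    induction k with
    | zero => omega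
    | succ n ih =>
      rcases Nat.lt_or_ge n 3 with h | h
      · have hn : n = 2 := by omega
        subst hn; exact hΓ3
      · rw [hrec n h]
        exact div_pos (hβpos _) (by linarith [ih h])
  rw [Metric.tendsto_atTop]
  intro ε hε
  set ε' : ℝ := ε / 4 with hε'
  have hε'pos : 0 < ε' := by positivity
  -- N₁ : control on β
  have hβ' := Metric.tendsto_atTop.mp hβ (min (1/2) ((3/7) * ε'))
    (lt_min (by norm_num) (by positivity))
  obtain ⟨N₁, hN₁⟩ := hβ'
  have hβband : ∀ n, N₁ ≤ n → 3/2 ≤ β n ∧ β n ≤ 5/2 := by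
    intro n hn
    have := hN₁ n hn
    rw [Real.dist_eq] at this
    have h2 : |β n - 2| < 1/2 := lt_of_lt_of_le this (min_le_left _ _)
    rw [abs_lt] at h2
    constructor <;> linarith [h2.1, h2.2]
  have hβsmall : ∀ n, N₁ ≤ n → |β n - 2| ≤ (3/7) * ε' := by
    intro n hn
    have := hN₁ n hn
    rw [Real.dist_eq] at this
    exact le_of_lt (lt_of_lt_of_le this (min_le_right _ _))
  set M : ℕ := max N₁ 3 with hM
  -- upper bound on Γ
  have hub : ∀ n, M + 1 ≤ n → Γ n ≤ 5/2 := by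
    intro n hn
    obtain ⟨m, rfl⟩ : ∃ m, n = m + 1 := ⟨n - 1, by omega⟩
    have h3M : 3 ≤ M := le_max_right N₁ 3
    have hNM : N₁ ≤ M := le_max_left N₁ 3
    have hm3 : 3 ≤ m := by omega
    have hmN : N₁ ≤ m + 1 := by omega
    rw [hrec m hm3]
    have h1 : (1:ℝ) ≤ 1 + Γ m := by linarith [hpos m hm3]
    calc β (m+1) / (1 + Γ m) ≤ β (m+1) / 1 :=
          div_le_div_of_nonneg_left (le_of_lt (hβpos _)) (by norm_num) h1
      _ = β (m+1) := by ring
      _ ≤ 5/2 := (hβband (m+1) hmN).2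
  set N : ℕ := M + 2 with hN
  -- lower bound on Γ
  have hlb : ∀ n, N ≤ n → 3/7 ≤ Γ n := by
    intro n hn
    obtain ⟨m, rfl⟩ : ∃ m, n = m + 1 := ⟨n - 1, by omega⟩
    have hm3 : 3 ≤ m := by
      have h3M : 3 ≤ M := le_max_right _ _
      omega
    have hmub : Γ m ≤ 5/2 := hub m (by omega)
    have hNM : N₁ ≤ M := le_max_left N₁ 3
    have hmN : N₁ ≤ m + 1 := by omega
    rw [hrec m hm3]
    have h0 : (0:ℝ) < 1 + Γ m := by linarith [hpos m hm3]
    have : (3/2 : ℝ) / (7/2) ≤ β (m+1) / (1 + Γ m) :=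
      div_le_div₀ (le_of_lt (hβpos _)) (hβband (m+1) hmN).1 h0 (by linarith)
    linarith [this]
  -- Γ in [3/7, 5/2] for n ≥ N
  have hband : ∀ n, N ≤ n → |Γ n - 1| ≤ 3/2 := by
    intro n hn
    have h1 := hlb n hn
    have h2 := hub n (by omega)
    rw [abs_le]; constructor <;> linarith
  -- contraction
  have hcontr : ∀ k, N ≤ k → |Γ (k+1) - 1| ≤ (7/10) * (|β (k+1) - 2| + |Γ k - 1|) := by
    intro k hk
    have hk3 : 3 ≤ k := by
      have h3M : 3 ≤ M := le_max_right N₁ 3; omega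
    have h0 : (0:ℝ) < 1 + Γ k := by linarith [hpos k hk3]
    have h10 : (10:ℝ)/7 ≤ 1 + Γ k := by linarith [hlb k hk]
    rw [hrec k hk3]
    have heq : β (k+1) / (1 + Γ k) - 1 = (β (k+1) - 2 - (Γ k - 1)) / (1 + Γ k) := by
      field_simp
      ring
    rw [heq, abs_div, abs_of_pos h0]
    have habs : |β (k+1) - 2 - (Γ k - 1)| ≤ |β (k+1) - 2| + |Γ k - 1| := abs_sub _ _
    have := div_le_div₀ (by positivity) habs (by norm_num : (0:ℝ) < 10/7) h10
    calc |β (k+1) - 2 - (Γ k - 1)| / (1 + Γ k)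
        ≤ (|β (k+1) - 2| + |Γ k - 1|) / (10/7) := this
      _ = (7/10) * (|β (k+1) - 2| + |Γ k - 1|) := by ring
  -- geometric decay by induction
  have hdecay : ∀ j, |Γ (N + j) - 1| ≤ (7/10)^j * 2 + ε' := by
    intro j
    induction j with
    | zero =>
      have := hband N le_rfl
      simpa using by linarith
    | succ j ih =>
      have hk : N ≤ N + j := by omega
      have hc := hcontr (N + j) hk
      have hbs : |β (N + j + 1) - 2| ≤ (3/7) * ε' := by
        apply hβsmall
        have : N₁ ≤ M := le_max_left _ _
        omega
      have hpow : (0:ℝ) ≤ (7/10)^j := by positivity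
      have : |Γ (N + j + 1) - 1| ≤ (7/10) * ((3/7) * ε' + ((7/10)^j * 2 + ε')) := by
        calc |Γ (N + j + 1) - 1| ≤ (7/10) * (|β (N + j + 1) - 2| + |Γ (N + j) - 1|) := hc
          _ ≤ (7/10) * ((3/7) * ε' + ((7/10)^j * 2 + ε')) := by nlinarith [abs_nonneg (β (N+j+1) - 2)]
      have hps : (7/10 : ℝ) * ((7/10)^j * 2) = (7/10)^(j+1) * 2 := by ring
      calc |Γ (N + (j+1)) - 1| = |Γ (N + j + 1) - 1| := by ring_nf
        _ ≤ (7/10) * ((3/7) * ε' + ((7/10)^j * 2 + ε')) := this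
        _ = (7/10)^(j+1) * 2 + ε' := by ring
  -- choose J
  obtain ⟨J, hJ⟩ := exists_pow_lt_of_lt_one (show (0:ℝ) < ε'/2 by positivity)
    (by norm_num : (7:ℝ)/10 < 1)
  refine ⟨N + J, fun n hn => ?_⟩
  obtain ⟨j, rfl⟩ : ∃ j, n = N + j := ⟨n - N, by omega⟩
  have hj : J ≤ j := by omega
  have hmono : (7/10 : ℝ)^j ≤ (7/10)^J :=
    pow_le_pow_of_le_one (by norm_num) (by norm_num) hj
  have := hdecay j
  rw [Real.dist_eq]
  have : |Γ (N + j) - 1| ≤ (7/10)^J * 2 + ε' := by nlinarith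
  calc |Γ (N + j) - 1| ≤ (7/10)^J * 2 + ε' := this
    _ < (ε'/2) * 2 + ε' := by nlinarith
    _ < ε := by rw [hε']; linarith
end
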